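/- Let P, Q be finite posets and ξ : P → Q an order homomorphism. Define on G(ξ) the relation a ≼_0 b iff there exist a' ∈ a, b' ∈ b with a' ≤_P b', and let ≼ be its transitive hull. Then ≼ is a partial order on G(ξ), the canonical map π_ξ : P → G(ξ), x ↦ G_ξ(x), is an order homomorphism, and the induced map ι_ξ : G(ξ) → Q, G_ξ(x) ↦ ξ(x), is a strict order homomorphism satisfying ξ = ι_ξ ∘ π_ξ. -/

import Mathlib

/-!
Every `≼₀`-step `a ≼₀ b` satisfies `a = b ∨ ι a < ι b`: a witness `a' ≤ b'` with
`ξ a' = ξ b'` is either an equality or a comparability inside one fibre, so it cannot leave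
the component. This dichotomy is stable under composition, so it holds for the transitive
hull `≼` as well, which gives antisymmetry of `≼` and strictness of `ι` at once.
-/

/-- Zigzag connectivity within a subset `A`. -/
def ZigConn {α : Type*} [PartialOrder α] (A : Set α) (x y : α) : Prop :=
  Relation.ReflTransGen (fun a b => a ∈ A ∧ b ∈ A ∧ (a < b ∨ b < a)) x y

/-- The zigzag-connectivity component of `x` inside the pre-image `ξ⁻¹(ξ(x))`. -/
def Gxi {P Q : Type*} [PartialOrder P] (ξ : P → Q) (x : P) : Set P :=
  {y | ZigConn (ξ ⁻¹' {ξ x}) x y}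

/-- The partition `G(ξ)` of `P` into the components `G_ξ(x)`, as a type. -/
def GType {P Q : Type*} [PartialOrder P] (ξ : P → Q) : Type _ :=
  {s : Set P // ∃ x : P, s = Gxi ξ x}

/-- The relation `≼₀` on `G(ξ)`. -/
def Prec0 {P Q : Type*} [PartialOrder P] (ξ : P → Q) (a b : GType ξ) : Prop :=
  ∃ a' ∈ a.1, ∃ b' ∈ b.1, a' ≤ b'

/-- The transitive hull of a relation. -/
def TransHull {X : Type*} (R : X → X → Prop) (x y : X) : Prop :=
  ∀ S : X → X → Prop, Transitive S → (∀ a b, R a b → S a b) → S x y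

/-- The relation `≼` on `G(ξ)`: the transitive hull of `≼₀`. -/
def Prec {P Q : Type*} [PartialOrder P] (ξ : P → Q) : GType ξ → GType ξ → Prop :=
  TransHull (Prec0 ξ)

section TransHull

variable {X : Type*} {R : X → X → Prop} {x y z : X}

theorem TransHull.single (h : R x y) : TransHull R x y := fun _ _ hR => hR _ _ h

theorem TransHull.trans (hxy : TransHull R x y) (hyz : TransHull R y z) : TransHull R x z :=
  fun S hS hR => hS (hxy S hS hR) (hyz S hS hR)

theorem TransHull.transGen (h : TransHull R x y) : Relation.TransGen R x y :=
  h _ (fun _ _ _ => Relation.TransGen.trans) fun _ _ => .single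

end TransHull

theorem Relation.TransGen.eq_or_lt_of_forall {X Q : Type*} [Preorder Q] {R : X → X → Prop}
    {f : X → Q} (hR : ∀ a b, R a b → a = b ∨ f a < f b) {x y : X}
    (h : Relation.TransGen R x y) : x = y ∨ f x < f y := by
  induction h with
  | single hxy => exact hR _ _ hxy
  | @tail b c _ hbc ih =>
    rcases ih, hR b c hbc with ⟨rfl | hxb, rfl | hbc⟩
    · exact .inl rfl
    · exact .inr hbc
    · exact .inr hxb
    · exact .inr (hxb.trans hbc)

theorem ZigConn.symm {α : Type*} [PartialOrder α] {A : Set α} {x y : α}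
    (h : ZigConn A x y) : ZigConn A y x := by
  induction h with
  | refl => exact .refl
  | tail _ hstep ih => exact .head ⟨hstep.2.1, hstep.1, hstep.2.2.symm⟩ ih

section Components

variable {P Q : Type*} [PartialOrder P] (ξ : P → Q)

theorem mem_Gxi_self (x : P) : x ∈ Gxi ξ x := .refl

variable {ξ}

theorem apply_eq_of_mem_Gxi {x y : P} (h : y ∈ Gxi ξ x) : ξ y = ξ x := by
  induction h with
  | refl => rfl
  | tail _ hstep => exact hstep.2.1

theorem Gxi_eq_of_mem {x y : P} (h : y ∈ Gxi ξ x) : Gxi ξ y = Gxi ξ x := by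
  have hfibre : ξ ⁻¹' {ξ y} = ξ ⁻¹' {ξ x} := by rw [apply_eq_of_mem_Gxi h]
  ext z
  simp only [Gxi, Set.mem_ofPred_eq, hfibre]
  exact ⟨(show ZigConn _ x y from h).trans, (ZigConn.symm h).trans⟩

theorem mem_Gxi_of_le_of_apply_eq {x y : P} (hxy : x ≤ y) (hξ : ξ x = ξ y) : y ∈ Gxi ξ x := by
  rcases hxy.eq_or_lt with rfl | hlt
  · exact mem_Gxi_self ξ x
  · exact .single ⟨rfl, hξ.symm, .inl hlt⟩

end Components

namespace GType

variable {P Q : Type*} [PartialOrder P] {ξ : P → Q}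

/-- The induced map `ι_ξ : G(ξ) → Q`. -/
noncomputable def iota (a : GType ξ) : Q := ξ a.2.choose

theorem val_eq_Gxi_of_mem {a : GType ξ} {x : P} (hx : x ∈ a.1) : a.1 = Gxi ξ x := by
  rw [a.2.choose_spec] at hx ⊢
  exact (Gxi_eq_of_mem hx).symm

theorem iota_eq_of_mem {a : GType ξ} {x : P} (hx : x ∈ a.1) : a.iota = ξ x := by
  rw [a.2.choose_spec] at hx
  exact (apply_eq_of_mem_Gxi hx).symm

theorem iota_mk (x : P) : iota (⟨Gxi ξ x, x, rfl⟩ : GType ξ) = ξ x :=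
  iota_eq_of_mem (mem_Gxi_self ξ x)

theorem prec0_refl (a : GType ξ) : Prec0 ξ a a := by
  obtain ⟨x, hx⟩ := a.2
  have hxa : x ∈ a.1 := hx ▸ mem_Gxi_self ξ x
  exact ⟨x, hxa, x, hxa, le_rfl⟩

variable [PartialOrder Q]

theorem eq_or_iota_lt_of_prec0 (hmono : Monotone ξ) {a b : GType ξ} (h : Prec0 ξ a b) :
    a = b ∨ a.iota < b.iota := by
  obtain ⟨a', ha', b', hb', hab⟩ := h
  rw [iota_eq_of_mem ha', iota_eq_of_mem hb']
  rcases (hmono hab).eq_or_lt with hξ | hlt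
  · refine .inl (Subtype.ext ?_)
    rw [val_eq_Gxi_of_mem ha', val_eq_Gxi_of_mem hb',
      Gxi_eq_of_mem (mem_Gxi_of_le_of_apply_eq hab hξ)]
  · exact .inr hlt

theorem eq_or_iota_lt_of_prec (hmono : Monotone ξ) {a b : GType ξ} (h : Prec ξ a b) :
    a = b ∨ a.iota < b.iota :=
  h.transGen.eq_or_lt_of_forall fun _ _ => eq_or_iota_lt_of_prec0 hmono

theorem iota_le_of_prec (hmono : Monotone ξ) {a b : GType ξ} (h : Prec ξ a b) :
    a.iota ≤ b.iota := by
  rcases eq_or_iota_lt_of_prec hmono h with rfl | hlt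
  exacts [le_rfl, hlt.le]

end GType

theorem stmt_9_general {P Q : Type} [PartialOrder P] [PartialOrder Q]
    (ξ : P → Q) (hmono : Monotone ξ) :
    -- `≼` is a partial order on `G(ξ)`
    (∀ a : GType ξ, Prec ξ a a) ∧
    (∀ a b : GType ξ, Prec ξ a b → Prec ξ b a → a = b) ∧
    (∀ a b c : GType ξ, Prec ξ a b → Prec ξ b c → Prec ξ a c) ∧
    -- `π_ξ` is an order homomorphism
    (∀ x y : P, x ≤ y →
      Prec ξ (⟨Gxi ξ x, x, rfl⟩ : GType ξ) (⟨Gxi ξ y, y, rfl⟩ : GType ξ)) ∧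
    -- `ι_ξ` is a strict order homomorphism with `ξ = ι_ξ ∘ π_ξ`
    (∃ ι : GType ξ → Q,
      (∀ x : P, ι ⟨Gxi ξ x, x, rfl⟩ = ξ x) ∧
      (∀ a b : GType ξ, Prec ξ a b → ι a ≤ ι b) ∧
      (∀ a b : GType ξ, Prec ξ a b → a ≠ b → ι a < ι b)) := by
  refine ⟨fun a => .single (GType.prec0_refl a), fun a b hab hba => ?_,
    fun _ _ _ => TransHull.trans,
    fun x y hxy => .single ⟨x, mem_Gxi_self ξ x, y, mem_Gxi_self ξ y, hxy⟩,
    GType.iota, GType.iota_mk, fun _ _ => GType.iota_le_of_prec hmono,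
    fun _ _ h hne => (GType.eq_or_iota_lt_of_prec hmono h).resolve_left hne⟩
  exact (GType.eq_or_iota_lt_of_prec hmono hab).resolve_right
    (GType.iota_le_of_prec hmono hba).not_gt

theorem stmt_9 {P Q : Type} [Fintype P] [PartialOrder P] [Fintype Q] [PartialOrder Q]
    (ξ : P → Q) (hmono : Monotone ξ) :
    -- `≼` is a partial order on `G(ξ)`
    (∀ a : GType ξ, Prec ξ a a) ∧
    (∀ a b : GType ξ, Prec ξ a b → Prec ξ b a → a = b) ∧
    (∀ a b c : GType ξ, Prec ξ a b → Prec ξ b c → Prec ξ a c) ∧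
    -- `π_ξ` is an order homomorphism
    (∀ x y : P, x ≤ y →
      Prec ξ (⟨Gxi ξ x, x, rfl⟩ : GType ξ) (⟨Gxi ξ y, y, rfl⟩ : GType ξ)) ∧
    -- `ι_ξ` is a strict order homomorphism with `ξ = ι_ξ ∘ π_ξ`
    (∃ ι : GType ξ → Q,
      (∀ x : P, ι ⟨Gxi ξ x, x, rfl⟩ = ξ x) ∧
      (∀ a b : GType ξ, Prec ξ a b → ι a ≤ ι b) ∧
      (∀ a b : GType ξ, Prec ξ a b → a ≠ b → ι a < ι b)) :=
  stmt_9_general ξ hmono
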